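/- For every i ∈ {1,…,μ}, the composite (τ₁ ∘ τ₂ ∘ ⋯ ∘ τ_μ) applied to K_i equals K_i + ε·V_i. In particular the 'variation' (τ₁∘⋯∘τ_μ)(K_i) − K_i equals ε·V_i. -/

import Mathlib

/-!
Applied to `K i`, the twists `τ j` with `j > i` act trivially because `K i • V j = 0`; then
`τ i` adds `ε • V i` because `K i • V i = 1`; and the remaining twists `τ j`, `j < i`, act
trivially because `K i • V j = -ε (V i • V j)` makes `K i + ε • V i` orthogonal to `V j`.
-/

theorem List.foldr_comp_id_apply_eq_self {α : Type*} {l : List (α → α)} {x : α}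
    (h : ∀ f ∈ l, f x = x) : l.foldr (· ∘ ·) id x = x := by
  induction l with
  | nil => rfl
  | cons f l ih =>
    simp only [List.mem_cons, forall_eq_or_imp] at h
    simp only [List.foldr_cons, Function.comp_apply, ih h.2, h.1]

theorem List.foldr_comp_ofFn_apply_eq {α : Type*} {n : ℕ} (f : Fin n → α → α) {x : α} (i : Fin n)
    (h_after : ∀ j, i < j → f j x = x) (h_before : ∀ j, j < i → f j (f i x) = f i x) :
    (List.ofFn f).foldr (· ∘ ·) id x = f i x := by
  induction n with
  | zero => exact i.elim0
  | succ n ih =>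
    rw [List.ofFn_succ, List.foldr_cons, Function.comp_apply]
    induction i using Fin.cases with
    | zero =>
      rw [List.foldr_comp_id_apply_eq_self]
      simpa [List.mem_ofFn] using fun j => h_after j.succ (Fin.succ_pos j)
    | succ i =>
      rw [ih (fun j => f j.succ) i (fun j hj => h_after j.succ (Fin.succ_lt_succ_iff.2 hj))
        (fun j hj => h_before j.succ (Fin.succ_lt_succ_iff.2 hj))]
      exact h_before 0 (Fin.succ_pos i)

/-- Picard–Lefschetz: for an adapted family `(K_i)` for the vanishing cycles
`(V_i)`, the composite of all Dehn twists sends `K_i` to `K_i + ε • V_i`. -/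
theorem stmt_1 (R : Type) [CommRing R] (M : Type) [AddCommGroup M] [Module R M]
    (B : M →ₗ[R] M →ₗ[R] R) (ε : R) (μ : ℕ) (V K : Fin μ → M)
    (τ : Fin μ → M → M)
    (hτ : ∀ i x, τ i x = x + (ε * B x (V i)) • V i)
    (h1 : ∀ i j : Fin μ, i < j → B (K j) (V i) = -(ε * B (V j) (V i)))
    (h2 : ∀ i j : Fin μ, j < i → B (K j) (V i) = 0)
    (h3 : ∀ j : Fin μ, B (K j) (V j) = 1) (i : Fin μ) :
    (List.ofFn τ).foldr (· ∘ ·) id (K i) = K i + ε • V i := by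
  have twist_K : τ i (K i) = K i + ε • V i := by rw [hτ, h3, mul_one]
  rw [← twist_K]
  refine List.foldr_comp_ofFn_apply_eq τ i (fun j hj => ?_) (fun j hj => ?_)
  · rw [hτ, h2 j i hj, mul_zero, zero_smul, add_zero]
  · have orthogonal : B (K i + ε • V i) (V j) = 0 := by
      simp only [map_add, map_smul, LinearMap.add_apply, LinearMap.smul_apply, h1 j i hj,
        smul_eq_mul, neg_add_cancel]
    rw [twist_K, hτ, orthogonal, mul_zero, zero_smul, add_zero]
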